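/- For all k, ℓ ∈ ℤ² ∖ {(0,0)}, with a = (k₂ℓ₁ − k₁ℓ₂)/(|k||ℓ|), one has 𝒵^{1,1}_{k,ℓ}(x) − 𝒵^{0,0}_{k,ℓ}(x) = a·sin((k+ℓ)·x)·(k₂ + ℓ₂, −(k₁ + ℓ₁)) for all x ∈ ℝ²; moreover, if k + ℓ ≠ (0,0) then ⟨𝒵^{1,1}_{k,ℓ} − 𝒵^{0,0}_{k,ℓ}, e^1_{k+ℓ}⟩_{L²} = −2π²·a·|k+ℓ|. -/

import Mathlib

/-- Euclidean norm of an integer vector. -/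
noncomputable def znorm (k : ℤ × ℤ) : ℝ := Real.sqrt ((k.1 : ℝ) ^ 2 + (k.2 : ℝ) ^ 2)

/-- The pairing `k · x = k₁x₁ + k₂x₂`. -/
noncomputable def kdot (k : ℤ × ℤ) (x : ℝ × ℝ) : ℝ := (k.1 : ℝ) * x.1 + (k.2 : ℝ) * x.2

/-- The vector field `e_k^0(x) = (k₂/|k|, −k₁/|k|)·cos(k·x)`. -/
noncomputable def e0 (k : ℤ × ℤ) : ℝ × ℝ → ℝ × ℝ := fun x =>
  (((k.2 : ℝ) / znorm k) * Real.cos (kdot k x), (-(k.1 : ℝ) / znorm k) * Real.cos (kdot k x))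

/-- The vector field `e_k^1(x) = (−k₂/|k|, k₁/|k|)·sin(k·x)`. -/
noncomputable def e1 (k : ℤ × ℤ) : ℝ × ℝ → ℝ × ℝ := fun x =>
  ((-(k.2 : ℝ) / znorm k) * Real.sin (kdot k x), ((k.1 : ℝ) / znorm k) * Real.sin (kdot k x))

/-- The advection `b(u,v) = (u·∇)v`, i.e. the derivative of `v` in the direction `u`. -/
noncomputable def adv (u v : ℝ × ℝ → ℝ × ℝ) : ℝ × ℝ → ℝ × ℝ := fun x => fderiv ℝ v x (u x)

/-- The `L²` pairing `⟨f,g⟩ = ∫_{[−π,π]²} f(x)·g(x) dx`. -/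
noncomputable def pairL2 (f g : ℝ × ℝ → ℝ × ℝ) : ℝ :=
  ∫ x in Set.Icc ((-Real.pi, -Real.pi) : ℝ × ℝ) ((Real.pi, Real.pi) : ℝ × ℝ),
    ((f x).1 * (g x).1 + (f x).2 * (g x).2)

/-- `𝒥^{0,1}_{k,ℓ} = b(e_k^0, e_ℓ^1) + b(e_ℓ^1, e_k^0)`. -/
noncomputable def J01 (k l : ℤ × ℤ) : ℝ × ℝ → ℝ × ℝ := fun x =>
  adv (e0 k) (e1 l) x + adv (e1 l) (e0 k) x

/-- `𝒥^{0,0}_{k,ℓ} = b(e_k^0, e_ℓ^0) + b(e_ℓ^0, e_k^0)`. -/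
noncomputable def J00 (k l : ℤ × ℤ) : ℝ × ℝ → ℝ × ℝ := fun x =>
  adv (e0 k) (e0 l) x + adv (e0 l) (e0 k) x

/-- `𝒥^{1,1}_{k,ℓ} = b(e_k^1, e_ℓ^1) + b(e_ℓ^1, e_k^1)`. -/
noncomputable def J11 (k l : ℤ × ℤ) : ℝ × ℝ → ℝ × ℝ := fun x =>
  adv (e1 k) (e1 l) x + adv (e1 l) (e1 k) x

/-- `𝒵^{0,1}_{k,ℓ} = b(e_k^0, e_ℓ^1) − b(e_ℓ^1, e_k^0)`. -/
noncomputable def Z01 (k l : ℤ × ℤ) : ℝ × ℝ → ℝ × ℝ := fun x =>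
  adv (e0 k) (e1 l) x - adv (e1 l) (e0 k) x

/-- `𝒵^{0,0}_{k,ℓ} = b(e_k^0, e_ℓ^0) − b(e_ℓ^0, e_k^0)`. -/
noncomputable def Z00 (k l : ℤ × ℤ) : ℝ × ℝ → ℝ × ℝ := fun x =>
  adv (e0 k) (e0 l) x - adv (e0 l) (e0 k) x

/-- `𝒵^{1,1}_{k,ℓ} = b(e_k^1, e_ℓ^1) − b(e_ℓ^1, e_k^1)`. -/
noncomputable def Z11 (k l : ℤ × ℤ) : ℝ × ℝ → ℝ × ℝ := fun x =>
  adv (e1 k) (e1 l) x - adv (e1 l) (e1 k) x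

open Real MeasureTheory

noncomputable def Lk (k : ℤ × ℤ) : ℝ × ℝ →L[ℝ] ℝ :=
  (k.1 : ℝ) • ContinuousLinearMap.fst ℝ ℝ ℝ + (k.2 : ℝ) • ContinuousLinearMap.snd ℝ ℝ ℝ

lemma Lk_apply (k : ℤ × ℤ) (x : ℝ × ℝ) : Lk k x = kdot k x := by
  simp [Lk, kdot]

lemma hasFDerivAt_kdot (k : ℤ × ℤ) (x : ℝ × ℝ) : HasFDerivAt (kdot k) (Lk k) x := by
  have : kdot k = ⇑(Lk k) := by funext y; rw [Lk_apply]
  rw [this]; exact (Lk k).hasFDerivAt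

lemma hasFDerivAt_cos_comp (k : ℤ × ℤ) (c : ℝ) (x : ℝ × ℝ) :
    HasFDerivAt (fun y => c * Real.cos (kdot k y))
      (c • ((-Real.sin (kdot k x)) • Lk k)) x := by
  have h := (Real.hasDerivAt_cos (kdot k x)).comp_hasFDerivAt x (hasFDerivAt_kdot k x)
  exact h.const_mul c

lemma hasFDerivAt_sin_comp (k : ℤ × ℤ) (c : ℝ) (x : ℝ × ℝ) :
    HasFDerivAt (fun y => c * Real.sin (kdot k y))
      (c • ((Real.cos (kdot k x)) • Lk k)) x := by
  have h := (Real.hasDerivAt_sin (kdot k x)).comp_hasFDerivAt x (hasFDerivAt_kdot k x)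
  exact h.const_mul c

lemma fderiv_e0_apply (k : ℤ × ℤ) (x u : ℝ × ℝ) :
    fderiv ℝ (e0 k) x u =
      (((k.2 : ℝ) / znorm k) * (-Real.sin (kdot k x) * kdot k u),
       ((-(k.1 : ℝ) / znorm k) * (-Real.sin (kdot k x) * kdot k u))) := by
  have h := HasFDerivAt.prodMk (hasFDerivAt_cos_comp k ((k.2 : ℝ) / znorm k) x)
    (hasFDerivAt_cos_comp k ((-(k.1 : ℝ)) / znorm k) x)
  have h2 : HasFDerivAt (e0 k) _ x := h
  rw [h2.fderiv]
  simp [Lk_apply, mul_assoc]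

lemma fderiv_e1_apply (k : ℤ × ℤ) (x u : ℝ × ℝ) :
    fderiv ℝ (e1 k) x u =
      (((-(k.2 : ℝ)) / znorm k) * (Real.cos (kdot k x) * kdot k u),
       (((k.1 : ℝ) / znorm k) * (Real.cos (kdot k x) * kdot k u))) := by
  have h := HasFDerivAt.prodMk (hasFDerivAt_sin_comp k ((-(k.2 : ℝ)) / znorm k) x)
    (hasFDerivAt_sin_comp k (((k.1 : ℝ)) / znorm k) x)
  have h2 : HasFDerivAt (e1 k) _ x := h
  rw [h2.fderiv]
  simp [Lk_apply, mul_assoc]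

lemma znorm_pos (k : ℤ × ℤ) (hk : k ≠ (0, 0)) : 0 < znorm k := by
  apply Real.sqrt_pos.mpr
  have : k.1 ≠ 0 ∨ k.2 ≠ 0 := by
    by_contra h
    push_neg at h
    exact hk (Prod.ext h.1 h.2)
  rcases this with h | h
  · have : (0:ℝ) < (k.1:ℝ)^2 := by positivity
    nlinarith [sq_nonneg ((k.2:ℝ))]
  · have : (0:ℝ) < (k.2:ℝ)^2 := by positivity
    nlinarith [sq_nonneg ((k.1:ℝ))]

lemma znorm_ne_zero (k : ℤ × ℤ) (hk : k ≠ (0, 0)) : znorm k ≠ 0 :=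
  ne_of_gt (znorm_pos k hk)

lemma znorm_sq (k : ℤ × ℤ) : znorm k * znorm k = (k.1:ℝ)^2 + (k.2:ℝ)^2 :=
  Real.mul_self_sqrt (by positivity)

lemma kdot_add (k l : ℤ × ℤ) (x : ℝ × ℝ) : kdot (k + l) x = kdot k x + kdot l x := by
  simp [kdot, Prod.fst_add, Prod.snd_add]
  ring

lemma pointwise_id (k l : ℤ × ℤ) (hk : k ≠ (0, 0)) (hl : l ≠ (0, 0))
    (a : ℝ) (ha : a = ((k.2 : ℝ) * (l.1 : ℝ) - (k.1 : ℝ) * (l.2 : ℝ)) / (znorm k * znorm l)) :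
    ∀ x : ℝ × ℝ,
      Z11 k l x - Z00 k l x =
        (a * Real.sin (kdot (k + l) x) * ((k.2 : ℝ) + (l.2 : ℝ)),
         a * Real.sin (kdot (k + l) x) * (-((k.1 : ℝ) + (l.1 : ℝ)))) := by
  intro x
  have hnk := znorm_ne_zero k hk
  have hnl := znorm_ne_zero l hl
  simp only [Z11, Z00, adv, fderiv_e0_apply, fderiv_e1_apply, ha, kdot_add, Real.sin_add]
  simp only [e0, e1, kdot, Prod.mk_sub_mk, Prod.mk.injEq]
  constructor <;> (field_simp; ring)

lemma int_cos (n : ℤ) (hn : n ≠ 0) (d : ℝ) :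
    ∫ x in (-π)..π, Real.cos (2*(n:ℝ)*x + d) = 0 := by
  have hne : (2*(n:ℝ)) ≠ 0 := by
    simp [Int.cast_ne_zero, hn]
  have hd : ∀ x ∈ Set.uIcc (-π) π, HasDerivAt (fun y => Real.sin (2*(n:ℝ)*y + d) / (2*(n:ℝ)))
      (Real.cos (2*(n:ℝ)*x + d)) x := by
    intro x _
    have h1 : HasDerivAt (fun y : ℝ => 2*(n:ℝ)*y + d) (2*(n:ℝ)) x := by
      simpa using ((hasDerivAt_id x).const_mul (2*(n:ℝ))).add_const d
    have h2 := (Real.hasDerivAt_sin (2*(n:ℝ)*x + d)).comp x h1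
    have h3 := h2.div_const (2*(n:ℝ))
    simpa [mul_div_assoc, mul_div_cancel_right₀ _ hne] using h3
  have hi : IntervalIntegrable (fun x => Real.cos (2*(n:ℝ)*x + d)) volume (-π) π :=
    (Continuous.intervalIntegrable (by continuity) _ _)
  rw [intervalIntegral.integral_eq_sub_of_hasDerivAt hd hi]
  have e1 : 2*(n:ℝ)*π + d = d + (n:ℤ) * (2*π) := by ring
  have e2 : 2*(n:ℝ)*(-π) + d = d + (-n:ℤ) * (2*π) := by push_cast; ring
  rw [e1, e2, Real.sin_add_int_mul_two_pi, Real.sin_add_int_mul_two_pi]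
  ring

lemma int_sinsq (n : ℤ) (hn : n ≠ 0) (d : ℝ) :
    ∫ x in (-π)..π, (Real.sin ((n:ℝ)*x + d))^2 = π := by
  have key : ∀ x : ℝ, (Real.sin ((n:ℝ)*x + d))^2 = 1/2 - Real.cos (2*(n:ℝ)*x + 2*d) / 2 := by
    intro x
    rw [Real.sin_sq_eq_half_sub]
    ring_nf
  simp only [key]
  rw [intervalIntegral.integral_sub (Continuous.intervalIntegrable (by continuity) _ _)
    (Continuous.intervalIntegrable (by continuity) _ _)]
  have h2 : (∫ x in (-π)..π, Real.cos (2*(n:ℝ)*x + 2*d) / 2) = 0 := by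
    rw [intervalIntegral.integral_div, int_cos n hn (2*d)]
    simp
  rw [h2]
  simp
  ring

lemma icc_conv (g : ℝ → ℝ) : ∫ t in Set.Icc (-π) π, g t = ∫ t in (-π)..π, g t := by
  rw [integral_Icc_eq_integral_Ioc, ← intervalIntegral.integral_of_le (by linarith [pi_pos])]

lemma main_int (m : ℤ × ℤ) (hm : m ≠ (0, 0)) :
    ∫ x in Set.Icc ((-π, -π) : ℝ × ℝ) ((π, π) : ℝ × ℝ), Real.sin (kdot m x)^2 = 2*π^2 := by
  have hIcc : Set.Icc ((-π, -π) : ℝ × ℝ) ((π, π) : ℝ × ℝ)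
      = Set.Icc (-π) π ×ˢ Set.Icc (-π) π := by
    rw [Set.Icc_prod_eq]
  rw [hIcc, MeasureTheory.Measure.volume_eq_prod]
  rw [MeasureTheory.setIntegral_prod _ (by
    apply ContinuousOn.integrableOn_compact (IsCompact.prod isCompact_Icc isCompact_Icc)
    apply Continuous.continuousOn
    unfold kdot
    continuity)]
  have hcases : m.1 ≠ 0 ∨ m.2 ≠ 0 := by
    by_contra h
    push_neg at h
    exact hm (Prod.ext h.1 h.2)
  simp only [kdot]
  by_cases h2 : m.2 = 0
  · have h1 : m.1 ≠ 0 := by tauto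
    have inner : ∀ x : ℝ, (∫ y in Set.Icc (-π) π,
        Real.sin ((m.1:ℝ)*x + (m.2:ℝ)*y)^2) = (2*π) * Real.sin ((m.1:ℝ)*x)^2 := by
      intro x
      rw [icc_conv]
      simp only [h2, Int.cast_zero, zero_mul, add_zero, intervalIntegral.integral_const,
        smul_eq_mul]
      ring
    simp only [inner]
    rw [icc_conv, intervalIntegral.integral_const_mul]
    have := int_sinsq m.1 h1 0
    simp only [add_zero] at this
    rw [this]
    ring
  · have inner : ∀ x : ℝ, (∫ y in Set.Icc (-π) π,
        Real.sin ((m.1:ℝ)*x + (m.2:ℝ)*y)^2) = π := by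
      intro x
      rw [icc_conv]
      have := int_sinsq m.2 h2 ((m.1:ℝ)*x)
      simp_rw [add_comm ((m.1:ℝ)*x) _]
      exact this
    simp only [inner]
    rw [icc_conv]
    simp [intervalIntegral.integral_const]
    ring

theorem Z11_Z00_diff_identity_and_pairing (k l : ℤ × ℤ) (hk : k ≠ (0, 0)) (hl : l ≠ (0, 0))
    (a : ℝ) (ha : a = ((k.2 : ℝ) * (l.1 : ℝ) - (k.1 : ℝ) * (l.2 : ℝ)) / (znorm k * znorm l)) :
    (∀ x : ℝ × ℝ,
      Z11 k l x - Z00 k l x =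
        (a * Real.sin (kdot (k + l) x) * ((k.2 : ℝ) + (l.2 : ℝ)),
         a * Real.sin (kdot (k + l) x) * (-((k.1 : ℝ) + (l.1 : ℝ))))) ∧
    (k + l ≠ (0, 0) →
      pairL2 (fun x => Z11 k l x - Z00 k l x) (e1 (k + l)) =
        -(2 * Real.pi ^ 2 * a * znorm (k + l))) := by
  have H := pointwise_id k l hk hl a ha
  refine ⟨H, fun hm => ?_⟩
  have hn := znorm_ne_zero (k + l) hm
  have hsq := znorm_sq (k + l)
  have hfst : ((k + l).1 : ℝ) = (k.1 : ℝ) + (l.1 : ℝ) := by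
    simp [Prod.fst_add]
  have hsnd : ((k + l).2 : ℝ) = (k.2 : ℝ) + (l.2 : ℝ) := by
    simp [Prod.snd_add]
  rw [hfst, hsnd] at hsq
  have key : ∀ x : ℝ × ℝ,
      ((Z11 k l x - Z00 k l x).1 * (e1 (k + l) x).1
        + (Z11 k l x - Z00 k l x).2 * (e1 (k + l) x).2)
      = (-(a * znorm (k + l))) * (Real.sin (kdot (k + l) x))^2 := by
    intro x
    rw [H x]
    simp only [e1, hfst, hsnd]
    field_simp
    linear_combination (a * Real.sin (kdot (k + l) x)^2) * hsq
  simp only [pairL2, key]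
  rw [MeasureTheory.integral_const_mul, main_int (k + l) hm]
  ring
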